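/- Iteration is idempotent with respect to chop: for any setoid trace predicate P, P* ⇔ P* ** P*. -/

import Mathlib

namespace WhileTrace

/-- Program variables. -/
abbrev Var := ℕ
/-- States assign integer values to variables. -/
abbrev State := Var → ℤ
/-- Arithmetic expressions, modelled by their integer value in each state. -/
abbrev Expr := State → ℤ

/-- State update `σ[x ↦ v]`. -/
def update (σ : State) (x : Var) (v : ℤ) : State := Function.update σ x v

/-- Reading an expression as a boolean: `σ ⊨ e`. -/
def istrue (e : Expr) (σ : State) : Prop := e σ ≠ 0

/-- Traces: nonempty, possibly infinite sequences of states
(a head state together with a possibly infinite sequence of further states). -/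
def Trace : Type := State × Stream'.Seq State

/-- The singleton trace `⟨σ⟩`. -/
def Trace.single (σ : State) : Trace := (σ, Stream'.Seq.nil)

/-- The cons trace `σ :: τ`. -/
def Trace.cons (σ : State) (τ : Trace) : Trace := (σ, Stream'.Seq.cons τ.1 τ.2)

/-- The first state of a trace. -/
def Trace.hd (τ : Trace) : State := τ.1

/-- Bisimilarity of traces `τ ≈ τ'`, as a greatest fixed point:
there is a relation `R` relating the two traces that is consistent with the
coinductive rules `⟨σ⟩ ≈ ⟨σ⟩` and `σ::τ ≈ σ::τ'` whenever `τ ≈ τ'`. -/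
def Bisim (τ τ' : Trace) : Prop :=
  ∃ R : Trace → Trace → Prop, R τ τ' ∧
    ∀ a b, R a b →
      (∃ σ, a = Trace.single σ ∧ b = Trace.single σ) ∨
      (∃ σ a' b', a = Trace.cons σ a' ∧ b = Trace.cons σ b' ∧ R a' b')

/-- Finiteness `τ ↓ σ` : `τ` is finite with last state `σ` (inductive). -/
inductive Converges : Trace → State → Prop
  | single (σ : State) : Converges (Trace.single σ) σ
  | cons (σ' : State) {τ : Trace} {σ : State} :
      Converges τ σ → Converges (Trace.cons σ' τ) σ

/-- Infiniteness of a trace (coinductive, as a greatest fixed point). -/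
def InfiniteT (τ : Trace) : Prop :=
  ∃ P : Trace → Prop, P τ ∧ ∀ a, P a → ∃ σ a', a = Trace.cons σ a' ∧ P a'

/-- Statements of the While language. -/
inductive Stmt : Type
  | assign (x : Var) (e : Expr)
  | skip
  | seq (s₀ s₁ : Stmt)
  | ifte (e : Expr) (st sf : Stmt)
  | whileDo (e : Expr) (st : Stmt)

/-- A pair of relations `(E, ES)` is consistent with the rules of evaluation
and extended evaluation: every claimed evaluation is backed by one of the
coinductive rules, with premises again in `(E, ES)`. -/
def EvalConsistent (E : Stmt → State → Trace → Prop)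
    (ES : Stmt → Trace → Trace → Prop) : Prop :=
  (∀ x e σ τ, E (.assign x e) σ τ →
      τ = Trace.cons σ (Trace.single (update σ x (e σ)))) ∧
  (∀ σ τ, E .skip σ τ → τ = Trace.single σ) ∧
  (∀ s₀ s₁ σ τ', E (.seq s₀ s₁) σ τ' → ∃ τ, E s₀ σ τ ∧ ES s₁ τ τ') ∧
  (∀ e st sf σ τ, E (.ifte e st sf) σ τ →
      (istrue e σ ∧ ES st (Trace.cons σ (Trace.single σ)) τ) ∨
      (¬ istrue e σ ∧ ES sf (Trace.cons σ (Trace.single σ)) τ)) ∧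
  (∀ e st σ τ', E (.whileDo e st) σ τ' →
      (istrue e σ ∧ ∃ τ, ES st (Trace.cons σ (Trace.single σ)) τ ∧
        ES (.whileDo e st) τ τ') ∨
      (¬ istrue e σ ∧ τ' = Trace.cons σ (Trace.single σ))) ∧
  (∀ s τ τ', ES s τ τ' →
      (∃ σ, τ = Trace.single σ ∧ E s σ τ') ∨
      (∃ σ τ₀ τ₀', τ = Trace.cons σ τ₀ ∧ τ' = Trace.cons σ τ₀' ∧ ES s τ₀ τ₀'))

/-- Evaluation `(s,σ) ⇒ τ` : greatest fixed point of the mutual coinductive rules. -/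
def Exec (s : Stmt) (σ : State) (τ : Trace) : Prop :=
  ∃ E ES, EvalConsistent E ES ∧ E s σ τ

/-- Extended evaluation `(s,τ) ⇒* τ'`. -/
def ExecSeq (s : Stmt) (τ τ' : Trace) : Prop :=
  ∃ E ES, EvalConsistent E ES ∧ ES s τ τ'

/-- The standard inductive state-based big-step semantics `(s,σ) ⇓ σ'`. -/
inductive BigStep : Stmt → State → State → Prop
  | assign (x : Var) (e : Expr) (σ : State) :
      BigStep (.assign x e) σ (update σ x (e σ))
  | skip (σ : State) : BigStep .skip σ σ
  | seq {s₀ s₁ : Stmt} {σ σ' σ'' : State} :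
      BigStep s₀ σ σ' → BigStep s₁ σ' σ'' → BigStep (.seq s₀ s₁) σ σ''
  | ifTrue {e : Expr} {st sf : Stmt} {σ σ' : State} :
      istrue e σ → BigStep st σ σ' → BigStep (.ifte e st sf) σ σ'
  | ifFalse {e : Expr} {st sf : Stmt} {σ σ' : State} :
      ¬ istrue e σ → BigStep sf σ σ' → BigStep (.ifte e st sf) σ σ'
  | whileTrue {e : Expr} {st : Stmt} {σ σ' σ'' : State} :
      istrue e σ → BigStep st σ σ' → BigStep (.whileDo e st) σ' σ'' →
      BigStep (.whileDo e st) σ σ''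
  | whileFalse {e : Expr} {st : Stmt} {σ : State} :
      ¬ istrue e σ → BigStep (.whileDo e st) σ σ

/-- State predicates. -/
abbrev StatePred := State → Prop
/-- Trace predicates. -/
abbrev TracePred := Trace → Prop

/-- A setoid trace predicate respects bisimilarity. -/
def IsSetoidPred (P : TracePred) : Prop := ∀ τ τ', P τ → Bisim τ τ' → P τ'

/-- The singleton predicate `[U]`. -/
def Sglt (U : StatePred) : TracePred :=
  fun τ => ∃ σ, U σ ∧ τ = Trace.single σ

/-- The doubleton predicate `⟨U⟩`. -/
def Dup (U : StatePred) : TracePred :=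
  fun τ => ∃ σ, U σ ∧ τ = Trace.cons σ (Trace.single σ)

/-- The update predicate `U[x ↦ e]`. -/
def UpdPred (U : StatePred) (x : Var) (e : Expr) : TracePred :=
  fun τ => ∃ σ, U σ ∧ τ = Trace.cons σ (Trace.single (update σ x (e σ)))

/-- `Q follows τ in τ'` (coinductive, as a greatest fixed point). -/
def Follows (Q : TracePred) (τ τ' : Trace) : Prop :=
  ∃ R : Trace → Trace → Prop, R τ τ' ∧
    ∀ a b, R a b →
      (∃ σ, a = Trace.single σ ∧ b.hd = σ ∧ Q b) ∨
      (∃ σ a' b', a = Trace.cons σ a' ∧ b = Trace.cons σ b' ∧ R a' b')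

/-- The chop `P ** Q`. -/
def Chop (P Q : TracePred) : TracePred :=
  fun τ' => ∃ τ, P τ ∧ Follows Q τ τ'

/-- The iteration `P*` (coinductive, as a greatest fixed point). -/
def Iter (P : TracePred) : TracePred := fun τ =>
  ∃ X : TracePred, X τ ∧
    ∀ a, X a → Sglt (fun _ => True) a ∨ ∃ τ₀, P τ₀ ∧ Follows X τ₀ a

/-- `Last P` : states that are the last state of some finite trace satisfying `P`. -/
def Last (P : TracePred) : StatePred := fun σ => ∃ τ, P τ ∧ Converges τ σ

/-- The trace predicate `finite`. -/
def FiniteT : TracePred := fun τ => ∃ σ, Converges τ σ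

/-- Derivability `⊢ {U} s {P}` in the trace-based Hoare logic. -/
inductive THoare : StatePred → Stmt → TracePred → Prop
  | assign (U : StatePred) (x : Var) (e : Expr) :
      THoare U (.assign x e) (UpdPred U x e)
  | skip (U : StatePred) : THoare U .skip (Sglt U)
  | seq {U V : StatePred} {s₀ s₁ : Stmt} {P Q : TracePred} :
      THoare U s₀ (Chop P (Sglt V)) → THoare V s₁ Q →
      THoare U (.seq s₀ s₁) (Chop P Q)
  | ifte {U : StatePred} {e : Expr} {st sf : Stmt} {P : TracePred} :
      THoare (fun σ => istrue e σ ∧ U σ) st P →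
      THoare (fun σ => ¬ istrue e σ ∧ U σ) sf P →
      THoare U (.ifte e st sf) (Chop (Dup U) P)
  | whileDo {U I : StatePred} {e : Expr} {st : Stmt} {P : TracePred} :
      (∀ σ, U σ → I σ) →
      THoare (fun σ => istrue e σ ∧ I σ) st (Chop P (Sglt I)) →
      THoare U (.whileDo e st)
        (Chop (Dup U)
          (Chop (Iter (Chop P (Dup I))) (Sglt (fun σ => ¬ istrue e σ))))
  | conseq {U U' : StatePred} {s : Stmt} {P P' : TracePred} :
      (∀ σ, U σ → U' σ) → THoare U' s P' → (∀ τ, P' τ → P τ) →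
      THoare U s P
  | exist {Z : Type} {U : Z → StatePred} {s : Stmt} {P : Z → TracePred} :
      (∀ z, THoare (U z) s (P z)) →
      THoare (fun σ => ∃ z, U z σ) s (fun τ => ∃ z, P z τ)

/-- Derivability `⊢p {U} s {Z}` in the state-based partial-correctness Hoare logic. -/
inductive PHoare : StatePred → Stmt → StatePred → Prop
  | assign (Z : StatePred) (x : Var) (e : Expr) :
      PHoare (fun σ => Z (update σ x (e σ))) (.assign x e) Z
  | skip (U : StatePred) : PHoare U .skip U
  | seq {U V Z : StatePred} {s₀ s₁ : Stmt} :
      PHoare U s₀ V → PHoare V s₁ Z → PHoare U (.seq s₀ s₁) Z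
  | ifte {U Z : StatePred} {e : Expr} {st sf : Stmt} :
      PHoare (fun σ => istrue e σ ∧ U σ) st Z →
      PHoare (fun σ => ¬ istrue e σ ∧ U σ) sf Z →
      PHoare U (.ifte e st sf) Z
  | whileDo {I : StatePred} {e : Expr} {st : Stmt} :
      PHoare (fun σ => istrue e σ ∧ I σ) st I →
      PHoare I (.whileDo e st) (fun σ => I σ ∧ ¬ istrue e σ)
  | exist {Z : Type} {U V : Z → StatePred} {s : Stmt} :
      (∀ z, PHoare (U z) s (V z)) →
      PHoare (fun σ => ∃ z, U z σ) s (fun σ => ∃ z, V z σ)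
  | conseq {U U' Z Z' : StatePred} {s : Stmt} :
      (∀ σ, U σ → U' σ) → PHoare U' s Z' → (∀ σ, Z' σ → Z σ) →
      PHoare U s Z

/-- Derivability `⊢t {U} s {Z}` in the state-based total-correctness Hoare
logic, with the `while-fun` rule. -/
inductive TotHoare : StatePred → Stmt → StatePred → Prop
  | assign (Z : StatePred) (x : Var) (e : Expr) :
      TotHoare (fun σ => Z (update σ x (e σ))) (.assign x e) Z
  | skip (U : StatePred) : TotHoare U .skip U
  | seq {U V Z : StatePred} {s₀ s₁ : Stmt} :
      TotHoare U s₀ V → TotHoare V s₁ Z → TotHoare U (.seq s₀ s₁) Z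
  | ifte {U Z : StatePred} {e : Expr} {st sf : Stmt} :
      TotHoare (fun σ => istrue e σ ∧ U σ) st Z →
      TotHoare (fun σ => ¬ istrue e σ ∧ U σ) sf Z →
      TotHoare U (.ifte e st sf) Z
  | whileFun {I : StatePred} {e : Expr} {st : Stmt} (t : State → ℕ) (m : ℕ) :
      (∀ n : ℕ, TotHoare (fun σ => istrue e σ ∧ I σ ∧ t σ = n) st
        (fun σ => I σ ∧ t σ < n)) →
      TotHoare (fun σ => I σ ∧ t σ = m) (.whileDo e st)
        (fun σ => I σ ∧ t σ ≤ m ∧ ¬ istrue e σ)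
  | exist {Z : Type} {U V : Z → StatePred} {s : Stmt} :
      (∀ z, TotHoare (U z) s (V z)) →
      TotHoare (fun σ => ∃ z, U z σ) s (fun σ => ∃ z, V z σ)
  | conseq {U U' Z Z' : StatePred} {s : Stmt} :
      (∀ σ, U σ → U' σ) → TotHoare U' s Z' → (∀ σ, Z' σ → Z σ) →
      TotHoare U s Z

namespace Trace

theorem single_ne_cons (σ σ' : State) (τ : Trace) : single σ ≠ cons σ' τ :=
  fun h => Stream'.Seq.nil_ne_cons (congrArg Prod.snd h)

theorem cons_inj {σ σ' : State} {τ τ' : Trace} (h : cons σ τ = cons σ' τ') :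
    σ = σ' ∧ τ = τ' := by
  obtain ⟨hhd, htl⟩ := Stream'.Seq.cons_injective2 (congrArg Prod.snd h)
  exact ⟨congrArg Prod.fst h, Prod.ext hhd htl⟩

end Trace

namespace Follows

variable {Q R : TracePred}

theorem mono (hQR : ∀ τ, Q τ → R τ) {τ τ' : Trace} (h : Follows Q τ τ') :
    Follows R τ τ' := by
  obtain ⟨S, hS, hcons⟩ := h
  refine ⟨S, hS, fun a b hab => (hcons a b hab).imp ?_ id⟩
  rintro ⟨σ, ha, hb, hQ⟩
  exact ⟨σ, ha, hb, hQR b hQ⟩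

theorem unfold {τ τ' : Trace} (h : Follows Q τ τ') :
    (∃ σ, τ = Trace.single σ ∧ τ'.hd = σ ∧ Q τ') ∨
    (∃ σ a b, τ = Trace.cons σ a ∧ τ' = Trace.cons σ b ∧ Follows Q a b) := by
  obtain ⟨S, hS, hcons⟩ := h
  exact (hcons _ _ hS).imp id fun ⟨σ, a, b, ha, hb, hab⟩ => ⟨σ, a, b, ha, hb, S, hab, hcons⟩

theorem hd_eq {τ τ' : Trace} (h : Follows Q τ τ') : τ'.hd = τ.hd := by
  rcases h.unfold with ⟨σ, rfl, hσ, -⟩ | ⟨σ, a, b, rfl, rfl, -⟩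
  · exact hσ
  · rfl

theorem single_hd {τ : Trace} (h : Q τ) : Follows Q (Trace.single τ.hd) τ :=
  ⟨fun a b => a = Trace.single b.hd ∧ Q b, ⟨rfl, h⟩,
    fun _ b ⟨ha, hb⟩ => Or.inl ⟨b.hd, ha, rfl, hb⟩⟩

theorem of_single {σ : State} {τ' : Trace} (h : Follows Q (Trace.single σ) τ') : Q τ' := by
  rcases h.unfold with ⟨_, -, -, hQ⟩ | ⟨_, _, _, hcons, -, -⟩
  · exact hQ
  · exact absurd hcons (Trace.single_ne_cons _ _ _)

theorem of_cons {σ : State} {τ τ' : Trace} (h : Follows Q (Trace.cons σ τ) τ') :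
    ∃ b, τ' = Trace.cons σ b ∧ Follows Q τ b := by
  rcases h.unfold with ⟨_, hsingle, -, -⟩ | ⟨σ', a, b, hcons, rfl, hab⟩
  · exact absurd hsingle.symm (Trace.single_ne_cons _ _ _)
  · obtain ⟨rfl, rfl⟩ := Trace.cons_inj hcons
    exact ⟨b, rfl, hab⟩

theorem chop {τ τ₁ τ' : Trace} (h₁ : Follows Q τ τ₁) (h₂ : Follows R τ₁ τ') :
    Follows (Chop Q R) τ τ' := by
  refine ⟨fun a b => ∃ t, Follows Q a t ∧ Follows R t b, ⟨τ₁, h₁, h₂⟩, ?_⟩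
  rintro a b ⟨t, hat, htb⟩
  rcases hat.unfold with ⟨σ, rfl, hσ, hQ⟩ | ⟨σ, a', t', rfl, rfl, ha't'⟩
  · exact Or.inl ⟨σ, rfl, htb.hd_eq.trans hσ, t, hQ, htb⟩
  · obtain ⟨b', rfl, ht'b'⟩ := htb.of_cons
    exact Or.inr ⟨σ, a', b', rfl, rfl, t', ha't', ht'b'⟩

end Follows

theorem chop_of_single_hd {P Q : TracePred} {τ : Trace} (hP : P (Trace.single τ.hd))
    (hQ : Q τ) : Chop P Q τ :=
  ⟨_, hP, Follows.single_hd hQ⟩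

namespace Iter

variable {P : TracePred}

theorem coinduct (X : TracePred)
    (hX : ∀ a, X a → Sglt (fun _ => True) a ∨ ∃ τ₀, P τ₀ ∧ Follows X τ₀ a) {τ : Trace}
    (h : X τ) : Iter P τ :=
  ⟨X, h, hX⟩

theorem unfold {τ : Trace} (h : Iter P τ) :
    Sglt (fun _ => True) τ ∨ ∃ τ₀, P τ₀ ∧ Follows (Iter P) τ₀ τ := by
  obtain ⟨X, hτ, hX⟩ := h
  exact (hX _ hτ).imp id fun ⟨τ₀, hP, hf⟩ => ⟨τ₀, hP, hf.mono fun a ha => ⟨X, ha, hX⟩⟩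

theorem single (σ : State) : Iter P (Trace.single σ) :=
  coinduct (· = Trace.single σ) (fun _ ha => Or.inl ⟨σ, trivial, ha⟩) rfl

theorem chop_self {τ : Trace} (h : Iter P τ) : Chop (Iter P) (Iter P) τ :=
  chop_of_single_hd (single _) h

/-- `P* ** P*` unfolds like `P*`: peel the first `P`-block off the left factor, or, if the
left factor is a singleton, off the right one. -/
theorem unfold_chop_self {τ : Trace} (h : Chop (Iter P) (Iter P) τ) :
    Sglt (fun _ => True) τ ∨
      ∃ τ₀, P τ₀ ∧ Follows (Chop (Iter P) (Iter P)) τ₀ τ := by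
  obtain ⟨τ₁, hτ₁, hf⟩ := h
  rcases hτ₁.unfold with ⟨σ, -, rfl⟩ | ⟨τ₀, hP, hf₀⟩
  · exact hf.of_single.unfold.imp id fun ⟨τ₀, hP, hf'⟩ =>
      ⟨τ₀, hP, hf'.mono fun _ => chop_self⟩
  · exact Or.inr ⟨τ₀, hP, hf₀.chop hf⟩

end Iter

theorem iter_idem_general (P : TracePred) :
    ∀ τ : Trace, Iter P τ ↔ Chop (Iter P) (Iter P) τ :=
  fun _ => ⟨Iter.chop_self, Iter.coinduct (P := P) _ fun _ => Iter.unfold_chop_self⟩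

/-- Iteration is idempotent with respect to chop: `P* ⇔ P* ** P*`. -/
theorem iter_idem (P : TracePred) (hP : IsSetoidPred P) :
    ∀ τ : Trace, Iter P τ ↔ Chop (Iter P) (Iter P) τ :=
  iter_idem_general P

end WhileTrace
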